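/- Let γ(r) be smooth on [0,L] with γ(r) = h + r²/(2R₁) + r⁴/(8R₃³) + O(r⁶) near r = 0 and γ ≥ h + C_ell r² on (0,L), where R₁, R₃ > 0. Define ϖ₀ as the radial solution of −(1/12)div(γ³∇ϖ₀) = f₀ on B(0,L) with ϖ₀ = 0 on ∂B(0,L), where f₀ is a constant. Then ∫_{B(0,L)} γ³|∇ϖ₀|² = 72π f₀² [ R₁²/h − 3R₁⁴/R₃³ · |ln h| ] + O(1) as h → 0⁺, where O(1) is bounded by a constant depending only on R₁, R₃, L, C_ell. -/

import Mathlib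

open MeasureTheory intervalIntegral Set Topology Filter


lemma inv_cube_diff_le {m x y : ℝ} (hm : 0 < m) (hx : m ≤ x) (hy : m ≤ y) :
    |1/x^3 - 1/y^3| ≤ 3 * |x - y| / m^4 := by
  have hx0 : 0 < x := hm.trans_le hx
  have hy0 : 0 < y := hm.trans_le hy
  have h1 : 1/x^3 - 1/y^3 = (y^3 - x^3) / (x^3 * y^3) := by
    field_simp
  rw [h1, abs_div, abs_of_pos (by positivity : (0:ℝ) < x^3*y^3)]
  have h2 : |y^3 - x^3| = |x - y| * (x^2 + x*y + y^2) := by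
    have : y^3 - x^3 = (y - x) * (x^2 + x*y + y^2) := by ring
    rw [this, abs_mul, abs_sub_comm, abs_of_pos (by positivity : (0:ℝ) < x^2 + x*y + y^2)]
  rw [h2, div_le_div_iff₀ (by positivity) (by positivity)]
  have p1 : m*m ≤ x*y := mul_le_mul hx hy hm.le hx0.le
  have p2 : m*m ≤ y*y := mul_le_mul hy hy hm.le hy0.le
  have p3 : m*m ≤ x*x := mul_le_mul hx hx hm.le hx0.le
  have e1 : m^4 ≤ x*y^3 := by nlinarith [mul_le_mul p1 p2 (by positivity) (by positivity)]
  have e2 : m^4 ≤ x^2*y^2 := by nlinarith [mul_le_mul p1 p1 (by positivity) (by positivity)]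
  have e3 : m^4 ≤ x^3*y := by nlinarith [mul_le_mul p3 p1 (by positivity) (by positivity)]
  have key : m^4 * (x^2 + x*y + y^2) ≤ 3 * (x^3 * y^3) := by
    nlinarith [mul_le_mul_of_nonneg_right e1 (by positivity : (0:ℝ) ≤ x^2),
      mul_le_mul_of_nonneg_right e2 (by positivity : (0:ℝ) ≤ x*y),
      mul_le_mul_of_nonneg_right e3 (by positivity : (0:ℝ) ≤ y^2)]
  calc |x - y| * (x^2 + x*y + y^2) * m^4 = |x - y| * (m^4 * (x^2 + x*y + y^2)) := by ring
    _ ≤ |x - y| * (3 * (x^3*y^3)) := by apply mul_le_mul_of_nonneg_left key (abs_nonneg _)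
    _ = 3 * |x - y| * (x^3 * y^3) := by ring

lemma cube_expand_lb {u w : ℝ} (hu : 0 < u) (hw : 0 ≤ w) :
    1/u^3 - 3*w/u^4 ≤ 1/(u+w)^3 := by
  have huw : 0 < u + w := by linarith
  have key : 1/(u+w)^3 - (1/u^3 - 3*w/u^4)
      = (6*u^2*w^2 + 8*u*w^3 + 3*w^4) / ((u+w)^3 * u^4) := by
    field_simp
    ring
  nlinarith [div_nonneg (by positivity : (0:ℝ) ≤ 6*u^2*w^2 + 8*u*w^3 + 3*w^4) (by positivity : (0:ℝ) ≤ (u+w)^3 * u^4)]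

lemma cube_expand_ub {u w : ℝ} (hu : 0 < u) (hw : 0 ≤ w) :
    1/(u+w)^3 ≤ 1/u^3 - 3*w/u^4 + 6*w^2/u^5 := by
  have huw : 0 < u + w := by linarith
  have key : (1/u^3 - 3*w/u^4 + 6*w^2/u^5) - 1/(u+w)^3
      = (10*u^2*w^3 + 15*u*w^4 + 6*w^5) / ((u+w)^3 * u^5) := by
    field_simp
    ring
  nlinarith [div_nonneg (by positivity : (0:ℝ) ≤ 10*u^2*w^3 + 15*u*w^4 + 6*w^5) (by positivity : (0:ℝ) ≤ (u+w)^3 * u^5)]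

noncomputable def Fmod (a b h : ℝ) (r : ℝ) : ℝ :=
  (1/(2*a^2)) * (-(h + a*r^2)⁻¹ + h/(2*(h+a*r^2)^2))
  - (3*b/(2*a^4)) * (Real.log (h+a*r^2) + 3*h/(h+a*r^2) - 3*h^2/(2*(h+a*r^2)^2)
      + h^3/(3*(h+a*r^2)^3))

lemma E1point {h c Ct x r₀ X Gx : ℝ} (hh : 0 < h) (hc : 0 < c) (hCt : 0 ≤ Ct)
    (hx0 : 0 < x) (hxr : x ≤ r₀)
    (hm : h + c*x^2 ≤ X) (hmG : h + c*x^2 ≤ Gx) (hT : |X - Gx| ≤ Ct*x^6) :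
    |x^3/X^3 - x^3/Gx^3| ≤ 3*Ct*r₀/c^4 := by
  have hmpos : 0 < h + c*x^2 := by positivity
  have hdiff : |1/X^3 - 1/Gx^3| ≤ 3*|X - Gx|/(h+c*x^2)^4 :=
    inv_cube_diff_le hmpos hm hmG
  have heq : x^3/X^3 - x^3/Gx^3 = x^3 * (1/X^3 - 1/Gx^3) := by ring
  rw [heq, abs_mul, abs_of_nonneg (by positivity : (0:ℝ) ≤ x^3)]
  calc x^3 * |1/X^3 - 1/Gx^3| ≤ x^3 * (3*|X - Gx|/(h+c*x^2)^4) :=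
        mul_le_mul_of_nonneg_left hdiff (by positivity)
    _ ≤ x^3 * (3*(Ct*x^6)/(h+c*x^2)^4) := by
        apply mul_le_mul_of_nonneg_left _ (by positivity)
        gcongr <;> exact hT
    _ ≤ x^3 * (3*(Ct*x^6)/(c*x^2)^4) := by
        apply mul_le_mul_of_nonneg_left _ (by positivity)
        apply div_le_div_of_nonneg_left (by positivity) (by positivity)
        exact pow_le_pow_left₀ (by positivity) (by linarith) 4
    _ = 3*Ct*x/c^4 := by
        field_simp
    _ ≤ 3*Ct*r₀/c^4 :=
        div_le_div_of_nonneg_right (by nlinarith) (by positivity)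

lemma E2point {h a b x r₀ : ℝ} (hh : 0 < h) (ha : 0 < a) (hb : 0 < b)
    (hx0 : 0 < x) (hxr : x ≤ r₀) :
    |x^3/((h+a*x^2)+b*x^4)^3 - (x^3/(h+a*x^2)^3 - 3*b*x^7/(h+a*x^2)^4)| ≤ 6*b^2*r₀/a^5 := by
  have hupos : 0 < h + a*x^2 := by positivity
  have hwnn : (0:ℝ) ≤ b*x^4 := by positivity
  have hlb : 1/(h+a*x^2)^3 - 3*(b*x^4)/(h+a*x^2)^4 ≤ 1/((h+a*x^2)+b*x^4)^3 :=
    cube_expand_lb hupos hwnn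
  have hub : 1/((h+a*x^2)+b*x^4)^3 ≤ 1/(h+a*x^2)^3 - 3*(b*x^4)/(h+a*x^2)^4
      + 6*(b*x^4)^2/(h+a*x^2)^5 :=
    cube_expand_ub hupos hwnn
  have hψx : x^3/((h+a*x^2)+b*x^4)^3 = x^3 * (1/((h+a*x^2) + b*x^4)^3) := by ring
  have hχx : x^3/(h+a*x^2)^3 - 3*b*x^7/(h+a*x^2)^4
      = x^3 * (1/(h+a*x^2)^3 - 3*(b*x^4)/(h+a*x^2)^4) := by ring
  have h1 : x^3 * (1/(h+a*x^2)^3 - 3*(b*x^4)/(h+a*x^2)^4)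
      ≤ x^3 * (1/((h+a*x^2) + b*x^4)^3) := mul_le_mul_of_nonneg_left hlb (by positivity)
  have h2 : x^3 * (1/((h+a*x^2) + b*x^4)^3)
      ≤ x^3 * (1/(h+a*x^2)^3 - 3*(b*x^4)/(h+a*x^2)^4) + x^3 * (6*(b*x^4)^2/(h+a*x^2)^5) := by
    nlinarith [mul_le_mul_of_nonneg_left hub (show (0:ℝ) ≤ x^3 by positivity)]
  have hbd : x^3 * (6*(b*x^4)^2/(h+a*x^2)^5) ≤ 6*b^2*r₀/a^5 := by
    calc x^3 * (6*(b*x^4)^2/(h+a*x^2)^5) ≤ x^3 * (6*(b*x^4)^2/(a*x^2)^5) := by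
          apply mul_le_mul_of_nonneg_left _ (by positivity)
          apply div_le_div_of_nonneg_left (by positivity) (by positivity)
          exact pow_le_pow_left₀ (by positivity) (by linarith) 5
      _ = 6*b^2*x/a^5 := by
          field_simp
      _ ≤ 6*b^2*r₀/a^5 :=
          div_le_div_of_nonneg_right (by nlinarith) (by positivity)
  have hr₀' : 0 < r₀ := hx0.trans_le hxr
  have hb6 : (0:ℝ) ≤ 6*b^2*r₀/a^5 := by positivity
  rw [hψx, hχx, abs_le]
  constructor
  · linarith
  · linarith

lemma tailpoint {Cell x r₀ X : ℝ} (hCell : 0 < Cell) (hr₀ : 0 < r₀) (hx : r₀ ≤ x)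
    (hX : Cell*x^2 ≤ X) :
    |x^3/X^3| ≤ 1/(Cell^3*r₀^3) := by
  have hx0 : 0 < x := hr₀.trans_le hx
  have hXpos : 0 < X := lt_of_lt_of_le (by positivity) hX
  rw [abs_of_nonneg (by positivity)]
  calc x^3/X^3 ≤ x^3/(Cell*x^2)^3 := by
        apply div_le_div_of_nonneg_left (by positivity) (by positivity)
        exact pow_le_pow_left₀ (by positivity) hX 3
    _ = 1/(Cell^3*x^3) := by
        field_simp
    _ ≤ 1/(Cell^3*r₀^3) := by
        apply div_le_div_of_nonneg_left (by norm_num) (by positivity)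
        exact mul_le_mul_of_nonneg_left (pow_le_pow_left₀ hr₀.le hx 3) (by positivity)

set_option maxHeartbeats 1000000 in
lemma Fmod_rem {R₁ R₃ h r₀ : ℝ} (hR₁ : 0 < R₁) (hR₃ : 0 < R₃) (hh : 0 < h) (hh1 : h ≤ 1)
    (hr₀ : 0 < r₀) :
    |Fmod (1/(2*R₁)) (1/(8*R₃^3)) h r₀ - Fmod (1/(2*R₁)) (1/(8*R₃^3)) h 0
      - (R₁^2/h - 3*R₁^4/R₃^3*|Real.log h|)|
    ≤ (1/(2*(1/(2*R₁))^2))*(3/(2*((1/(2*R₁))*r₀^2)))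
      + (3*(1/(8*R₃^3))/(2*(1/(2*R₁))^4))*(|Real.log ((1/(2*R₁))*r₀^2)|
          + |Real.log (1+(1/(2*R₁))*r₀^2)| + 20/3) := by
  have ha : (0:ℝ) < 1/(2*R₁) := by positivity
  have hb : (0:ℝ) < 1/(8*R₃^3) := by positivity
  set a : ℝ := 1/(2*R₁) with ha_def
  set b : ℝ := 1/(8*R₃^3) with hb_def
  have hHpos : 0 < h + a*r₀^2 := by positivity
  have hH1 : a*r₀^2 ≤ h + a*r₀^2 := by linarith
  have hH2 : h + a*r₀^2 ≤ 1 + a*r₀^2 := by linarith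
  have haR : (0:ℝ) ≤ a*r₀^2 := by positivity
  have hlogh : |Real.log h| = -Real.log h := abs_of_nonpos (Real.log_nonpos hh.le hh1)
  have hM' : R₁^2/h - 3*R₁^4/R₃^3*|Real.log h| = 1/(4*a^2*h) + (3*b/(2*a^4))*Real.log h := by
    rw [hlogh, ha_def, hb_def]
    field_simp
    ring
  have hid : Fmod a b h r₀ - Fmod a b h 0 - (R₁^2/h - 3*R₁^4/R₃^3*|Real.log h|) =
      (1/(2*a^2)) * (-(h + a*r₀^2)⁻¹ + h/(2*(h+a*r₀^2)^2))
      - (3*b/(2*a^4)) * (Real.log (h+a*r₀^2) + 3*h/(h+a*r₀^2) - 3*h^2/(2*(h+a*r₀^2)^2)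
          + h^3/(3*(h+a*r₀^2)^3) - 11/6) := by
    rw [hM']
    simp only [Fmod]
    norm_num
    field_simp
    ring
  rw [hid]
  have hXb : |(-(h + a*r₀^2)⁻¹ + h/(2*(h+a*r₀^2)^2))| ≤ 3/(2*(a*r₀^2)) := by
    have i1 : (h + a*r₀^2)⁻¹ ≤ (a*r₀^2)⁻¹ :=
      inv_anti₀ (by positivity) (by linarith)
    have i1' : 0 < (h + a*r₀^2)⁻¹ := by positivity
    have i2 : h/(2*(h+a*r₀^2)^2) ≤ 1/(2*(a*r₀^2)) := by
      rw [div_le_div_iff₀ (by positivity) (by positivity)]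
      nlinarith
    have i2' : 0 ≤ h/(2*(h+a*r₀^2)^2) := by positivity
    have i3 : (a*r₀^2)⁻¹ + 1/(2*(a*r₀^2)) = 3/(2*(a*r₀^2)) := by
      rw [inv_eq_one_div]
      field_simp
      ring
    have i4 : (0:ℝ) ≤ 1/(2*(a*r₀^2)) := by positivity
    rw [abs_le]
    constructor <;> linarith
  have hYb : |Real.log (h+a*r₀^2) + 3*h/(h+a*r₀^2) - 3*h^2/(2*(h+a*r₀^2)^2)
      + h^3/(3*(h+a*r₀^2)^3) - 11/6|
      ≤ |Real.log (a*r₀^2)| + |Real.log (1+a*r₀^2)| + 20/3 := by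
    have hlog1 : Real.log (a*r₀^2) ≤ Real.log (h+a*r₀^2) :=
      Real.log_le_log (by positivity) hH1
    have hlog2 : Real.log (h+a*r₀^2) ≤ Real.log (1+a*r₀^2) :=
      Real.log_le_log hHpos hH2
    have j1 : 3*h/(h+a*r₀^2) ≤ 3 := by
      rw [div_le_iff₀ hHpos]; linarith
    have j1' : 0 ≤ 3*h/(h+a*r₀^2) := by positivity
    have j2 : 3*h^2/(2*(h+a*r₀^2)^2) ≤ 3/2 := by
      rw [div_le_div_iff₀ (by positivity) (by norm_num)]
      nlinarith
    have j2' : 0 ≤ 3*h^2/(2*(h+a*r₀^2)^2) := by positivity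
    have j3 : h^3/(3*(h+a*r₀^2)^3) ≤ 1/3 := by
      rw [div_le_div_iff₀ (by positivity) (by norm_num)]
      nlinarith [pow_le_pow_left₀ hh.le (show h ≤ h + a*r₀^2 by linarith) 3]
    have j3' : 0 ≤ h^3/(3*(h+a*r₀^2)^3) := by positivity
    rw [abs_le]
    constructor
    · nlinarith [neg_abs_le (Real.log (a*r₀^2)), abs_nonneg (Real.log (1+a*r₀^2))]
    · nlinarith [le_abs_self (Real.log (1+a*r₀^2)), abs_nonneg (Real.log (a*r₀^2))]
  calc |(1/(2*a^2)) * (-(h + a*r₀^2)⁻¹ + h/(2*(h+a*r₀^2)^2))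
      - (3*b/(2*a^4)) * (Real.log (h+a*r₀^2) + 3*h/(h+a*r₀^2) - 3*h^2/(2*(h+a*r₀^2)^2)
          + h^3/(3*(h+a*r₀^2)^3) - 11/6)|
      ≤ |(1/(2*a^2)) * (-(h + a*r₀^2)⁻¹ + h/(2*(h+a*r₀^2)^2))|
        + |(3*b/(2*a^4)) * (Real.log (h+a*r₀^2) + 3*h/(h+a*r₀^2) - 3*h^2/(2*(h+a*r₀^2)^2)
          + h^3/(3*(h+a*r₀^2)^3) - 11/6)| := abs_sub _ _
    _ ≤ (1/(2*a^2))*(3/(2*(a*r₀^2)))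
        + (3*b/(2*a^4))*(|Real.log (a*r₀^2)| + |Real.log (1+a*r₀^2)| + 20/3) := by
        rw [abs_mul, abs_mul, abs_of_pos (show (0:ℝ) < 1/(2*a^2) by positivity),
          abs_of_pos (show (0:ℝ) < 3*b/(2*a^4) by positivity)]
        exact add_le_add (mul_le_mul_of_nonneg_left hXb (by positivity))
          (mul_le_mul_of_nonneg_left hYb (by positivity))

lemma hasDerivAt_Fmod {a b h : ℝ} (ha : 0 < a) (hh : 0 < h) (r : ℝ) :
    HasDerivAt (Fmod a b h)
      (r^3/(h+a*r^2)^3 - 3*b*r^7/(h+a*r^2)^4) r := by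
  have hu : HasDerivAt (fun r : ℝ => h + a*r^2) (2*a*r) r := by
    have := ((hasDerivAt_pow 2 r).const_mul a).const_add h
    refine this.congr_deriv ?_
    ring
  have hU : 0 < h + a*r^2 := by positivity
  have hne : h + a*r^2 ≠ 0 := ne_of_gt hU
  have hd2 : HasDerivAt (fun r : ℝ => 2*(h+a*r^2)^2) (2*(2*(h+a*r^2)^(2-1)*(2*a*r))) r :=
    (hu.pow 2).const_mul 2
  have hd3 : HasDerivAt (fun r : ℝ => 3*(h+a*r^2)^3) (3*(3*(h+a*r^2)^(3-1)*(2*a*r))) r :=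
    (hu.pow 3).const_mul 3
  have hne2 : 2*(h+a*r^2)^2 ≠ 0 := by positivity
  have hne3 : 3*(h+a*r^2)^3 ≠ 0 := by positivity
  have t1 : HasDerivAt (fun r : ℝ => (h+a*r^2)⁻¹) (-(2*a*r) / (h+a*r^2)^2) r := hu.inv hne
  have t2 : HasDerivAt (fun r : ℝ => h/(2*(h+a*r^2)^2))
      ((0 * (2*(h+a*r^2)^2) - h * (2*(2*(h+a*r^2)^(2-1)*(2*a*r)))) / (2*(h+a*r^2)^2)^2) r :=
    (hasDerivAt_const r h).div hd2 hne2
  have tlog : HasDerivAt (fun r : ℝ => Real.log (h+a*r^2)) ((2*a*r)/(h+a*r^2)) r :=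
    hu.log hne
  have t3 : HasDerivAt (fun r : ℝ => 3*h/(h+a*r^2))
      ((0 * (h+a*r^2) - 3*h * (2*a*r)) / (h+a*r^2)^2) r :=
    (hasDerivAt_const r (3*h)).div hu hne
  have t4 : HasDerivAt (fun r : ℝ => 3*h^2/(2*(h+a*r^2)^2))
      ((0 * (2*(h+a*r^2)^2) - 3*h^2 * (2*(2*(h+a*r^2)^(2-1)*(2*a*r)))) / (2*(h+a*r^2)^2)^2) r :=
    (hasDerivAt_const r (3*h^2)).div hd2 hne2
  have t5 : HasDerivAt (fun r : ℝ => h^3/(3*(h+a*r^2)^3))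
      ((0 * (3*(h+a*r^2)^3) - h^3 * (3*(3*(h+a*r^2)^(3-1)*(2*a*r)))) / (3*(h+a*r^2)^3)^2) r :=
    (hasDerivAt_const r (h^3)).div hd3 hne3
  have G1 := (t1.neg.add t2).const_mul (1/(2*a^2))
  have G2 := (((tlog.add t3).sub t4).add t5).const_mul (3*b/(2*a^4))
  have G := G1.sub G2
  refine G.congr_deriv ?_
  have hane : a ≠ 0 := ne_of_gt ha
  field_simp
  ring

set_option maxHeartbeats 2000000

/-- energy asymptotics for the radial lubrication pressure with constant
source f₀: since ϖ₀(r) = 6f₀∫_r^L s/γ(s)³ ds, the weighted Dirichlet energy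
2π∫_0^L γ³(∂_rϖ₀)² r dr equals 72π f₀²[R₁²/h - 3R₁⁴/R₃³·|ln h|] + O(1)·f₀². -/
theorem radial_energy_asymptotics
    (R₁ R₃ L Cell Ct r₀ : ℝ)
    (hR₁ : 0 < R₁) (hR₃ : 0 < R₃) (hL : 0 < L) (hCell : 0 < Cell)
    (hCt : 0 ≤ Ct) (hr₀ : 0 < r₀) (hr₀L : r₀ ≤ L) :
    ∃ h₀ > (0:ℝ), ∃ C : ℝ, ∀ h : ℝ, 0 < h → h ≤ h₀ →
      ∀ (γ : ℝ → ℝ) (f₀ : ℝ) (ϖ : ℝ → ℝ),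
        ContDiffOn ℝ (⊤ : ℕ∞) γ (Set.Icc 0 L) →
        (∀ r ∈ Set.Icc (0:ℝ) r₀,
          |γ r - (h + r ^ 2 / (2 * R₁) + r ^ 4 / (8 * R₃ ^ 3))| ≤ Ct * r ^ 6) →
        (∀ r ∈ Set.Icc (0:ℝ) L, h + Cell * r ^ 2 ≤ γ r) →
        ϖ = (fun r => 6 * f₀ * ∫ s in r..L, s / γ s ^ 3) →
        |(2 * Real.pi * ∫ r in (0:ℝ)..L, γ r ^ 3 * (deriv ϖ r) ^ 2 * r)
            - 72 * Real.pi * f₀ ^ 2 *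
                (R₁ ^ 2 / h - 3 * R₁ ^ 4 / R₃ ^ 3 * |Real.log h|)|
          ≤ C * f₀ ^ 2 := by
  set a : ℝ := 1/(2*R₁) with ha_def
  set b : ℝ := 1/(8*R₃^3) with hb_def
  set c : ℝ := min Cell a with hc_def
  have ha : 0 < a := by rw [ha_def]; positivity
  have hb : 0 < b := by rw [hb_def]; positivity
  have hc : 0 < c := lt_min hCell ha
  set RemB : ℝ := (1/(2*a^2))*(3/(2*(a*r₀^2)))
      + (3*b/(2*a^4))*(|Real.log (a*r₀^2)| + |Real.log (1+a*r₀^2)| + 20/3) with hRemB_def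
  have hRemB : 0 ≤ RemB := by rw [hRemB_def]; positivity
  set C' : ℝ := (3*Ct*r₀/c^4)*r₀ + (6*b^2*r₀/a^5)*r₀ + (1/(Cell^3*r₀^3))*(L - r₀) + RemB
    with hC'_def
  refine ⟨1, one_pos, 72*Real.pi*C', ?_⟩
  intro h hh hh1 γ f₀ ϖ hsm hTay hlow hπ
  subst hπ
  have hγc : ContinuousOn γ (Icc 0 L) := hsm.continuousOn
  have hγpos : ∀ x ∈ Icc (0:ℝ) L, 0 < γ x := by
    intro x hx
    have := hlow x hx
    nlinarith [sq_nonneg x]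
  -- the reduced integrand
  set φ : ℝ → ℝ := fun r => r^3/γ r^3 with hφ_def
  have hφc : ContinuousOn φ (Icc 0 L) := by
    apply ContinuousOn.div (by fun_prop) (hγc.pow 3)
    exact fun x hx => pow_ne_zero 3 (ne_of_gt (hγpos x hx))
  set M : ℝ := R₁^2/h - 3*R₁^4/R₃^3*|Real.log h| with hM_def
  set I : ℝ := ∫ r in (0:ℝ)..L, φ r with hI_def
  -- Step B : energy integral equals 36 f₀² I
  have hCong : (∫ r in (0:ℝ)..L, γ r^3 * (deriv (fun r => 6*f₀*∫ s in r..L, s/γ s^3) r)^2 * r)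
      = 36*f₀^2 * I := by
    have hae : ∀ᵐ x : ℝ, x ≠ L := by
      rw [ae_iff]
      simp only [ne_eq, not_not, Set.setOf_eq_eq_singleton]
      exact measure_singleton L
    have hfc : ContinuousOn (fun s => s/γ s^3) (Icc 0 L) := by
      apply ContinuousOn.div (by fun_prop) (hγc.pow 3)
      exact fun x hx => pow_ne_zero 3 (ne_of_gt (hγpos x hx))
    have hcong2 : ∀ᵐ x : ℝ, x ∈ Set.uIoc (0:ℝ) L →
        γ x^3 * (deriv (fun r => 6*f₀*∫ s in r..L, s/γ s^3) x)^2 * x = 36*f₀^2*φ x := by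
      filter_upwards [hae] with x hxL hxI
      rw [uIoc_of_le hL.le] at hxI
      have hx : x ∈ Ioo (0:ℝ) L := ⟨hxI.1, lt_of_le_of_ne hxI.2 hxL⟩
      have hmemIcc : Icc (0:ℝ) L ∈ 𝓝 x := Icc_mem_nhds hx.1 hx.2
      have hfa : ContinuousAt (fun s => s/γ s^3) x := hfc.continuousAt hmemIcc
      have hint : IntervalIntegrable (fun s => s/γ s^3) volume x L := by
        apply (hfc.mono ?_).intervalIntegrable
        rw [uIcc_of_le hx.2.le]
        exact Icc_subset_Icc hx.1.le le_rfl
      have hmeas : StronglyMeasurableAtFilter (fun s => s/γ s^3) (𝓝 x) volume :=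
        ⟨Icc 0 L, hmemIcc, hfc.aestronglyMeasurable measurableSet_Icc⟩
      have hD : HasDerivAt (fun u => ∫ s in u..L, s/γ s^3) (-(x/γ x^3)) x :=
        intervalIntegral.integral_hasDerivAt_left hint hmeas hfa
      have hD2 : HasDerivAt (fun r => 6*f₀*∫ s in r..L, s/γ s^3) (6*f₀*(-(x/γ x^3))) x :=
        hD.const_mul _
      rw [hD2.deriv]
      have hγx : γ x ≠ 0 := ne_of_gt (hγpos x (Ioo_subset_Icc_self hx))
      rw [hφ_def]
      field_simp
      ring
    calc (∫ r in (0:ℝ)..L, γ r^3 * (deriv (fun r => 6*f₀*∫ s in r..L, s/γ s^3) r)^2 * r)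
        = ∫ r in (0:ℝ)..L, 36*f₀^2*φ r := intervalIntegral.integral_congr_ae hcong2
      _ = 36*f₀^2 * I := intervalIntegral.integral_const_mul _ _
  -- Step C : the key estimate
  have hI : |I - M| ≤ C' := by
    set G : ℝ → ℝ := fun r => h + a*r^2 + b*r^4 with hG_def
    set χ : ℝ → ℝ := fun r => r^3/(h+a*r^2)^3 - 3*b*r^7/(h+a*r^2)^4 with hχ_def
    set ψ : ℝ → ℝ := fun r => r^3/(G r)^3 with hψ_def
    have hGpos : ∀ x : ℝ, 0 < G x := by
      intro x; simp only [hG_def]; positivity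
    have hψcont : Continuous ψ := by
      apply Continuous.div (by fun_prop)
      · simp only [hG_def]; fun_prop
      · exact fun x => pow_ne_zero 3 (ne_of_gt (hGpos x))
    have hχcont : Continuous χ := by
      apply Continuous.sub
      · exact Continuous.div (by fun_prop) (by fun_prop)
          (fun x => pow_ne_zero 3 (by positivity))
      · exact Continuous.div (by fun_prop) (by fun_prop)
          (fun x => pow_ne_zero 4 (by positivity))
    have hφint1 : IntervalIntegrable φ volume 0 r₀ := by
      apply (hφc.mono ?_).intervalIntegrable
      rw [uIcc_of_le hr₀.le]
      exact Icc_subset_Icc le_rfl hr₀L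
    have hφint2 : IntervalIntegrable φ volume r₀ L := by
      apply (hφc.mono ?_).intervalIntegrable
      rw [uIcc_of_le hr₀L]
      exact Icc_subset_Icc hr₀.le le_rfl
    have hsplit : I = (∫ r in (0:ℝ)..r₀, φ r) + ∫ r in r₀..L, φ r :=
      (integral_add_adjacent_intervals hφint1 hφint2).symm
    -- E1 : compare φ and ψ on [0, r₀]
    have hE1 : |(∫ r in (0:ℝ)..r₀, φ r) - ∫ r in (0:ℝ)..r₀, ψ r| ≤ (3*Ct*r₀/c^4)*r₀ := by
      rw [← intervalIntegral.integral_sub hφint1 (hψcont.intervalIntegrable _ _)]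
      have hb' := intervalIntegral.norm_integral_le_of_norm_le_const
        (C := 3*Ct*r₀/c^4) (f := fun r => φ r - ψ r) (a := (0:ℝ)) (b := r₀) ?_
      · rw [Real.norm_eq_abs, sub_zero, abs_of_nonneg hr₀.le] at hb'
        exact hb'
      · intro x hx
        rw [uIoc_of_le hr₀.le] at hx
        have hx0 : 0 < x := hx.1
        have hxr : x ≤ r₀ := hx.2
        have hxL : x ∈ Icc (0:ℝ) L := ⟨hx0.le, hxr.trans hr₀L⟩
        have hm : h + c*x^2 ≤ γ x := by
          have h1 := hlow x hxL
          have h2 : c ≤ Cell := min_le_left _ _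
          nlinarith [sq_nonneg x]
        have hmG : h + c*x^2 ≤ G x := by
          have h2 : c ≤ a := min_le_right _ _
          simp only [hG_def]
          nlinarith [sq_nonneg x, pow_nonneg hx0.le 4]
        have hTay' : |γ x - G x| ≤ Ct*x^6 := by
          have hGx : G x = h + x^2/(2*R₁) + x^4/(8*R₃^3) := by
            simp only [hG_def, ha_def, hb_def]; ring
          rw [hGx]
          exact hTay x ⟨hx0.le, hxr⟩
        show ‖φ x - ψ x‖ ≤ 3*Ct*r₀/c^4
        rw [Real.norm_eq_abs]
        have := E1point hh hc hCt hx0 hxr hm hmG hTay'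
        simpa only [hφ_def, hψ_def] using this
    -- E2 : compare ψ and χ on [0, r₀]
    have hE2 : |(∫ r in (0:ℝ)..r₀, ψ r) - ∫ r in (0:ℝ)..r₀, χ r| ≤ (6*b^2*r₀/a^5)*r₀ := by
      rw [← intervalIntegral.integral_sub (hψcont.intervalIntegrable _ _)
        (hχcont.intervalIntegrable _ _)]
      have hb' := intervalIntegral.norm_integral_le_of_norm_le_const
        (C := 6*b^2*r₀/a^5) (f := fun r => ψ r - χ r) (a := (0:ℝ)) (b := r₀) ?_
      · rw [Real.norm_eq_abs, sub_zero, abs_of_nonneg hr₀.le] at hb'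
        exact hb'
      · intro x hx
        rw [uIoc_of_le hr₀.le] at hx
        have hx0 : 0 < x := hx.1
        have hxr : x ≤ r₀ := hx.2
        show ‖ψ x - χ x‖ ≤ 6*b^2*r₀/a^5
        rw [Real.norm_eq_abs]
        have := E2point (a := a) (b := b) (h := h) hh ha hb hx0 hxr
        simpa only [hψ_def, hχ_def, hG_def] using this
    -- tail
    have hT : |∫ r in r₀..L, φ r| ≤ (1/(Cell^3*r₀^3))*(L-r₀) := by
      have hb' := intervalIntegral.norm_integral_le_of_norm_le_const
        (C := 1/(Cell^3*r₀^3)) (f := φ) (a := r₀) (b := L) ?_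
      · rw [Real.norm_eq_abs, abs_of_nonneg (by linarith : (0:ℝ) ≤ L - r₀)] at hb'
        exact hb'
      · intro x hx
        rw [uIoc_of_le hr₀L] at hx
        have hx0 : 0 < x := hr₀.trans hx.1
        have hxL : x ∈ Icc (0:ℝ) L := ⟨hx0.le, hx.2⟩
        have hγx : Cell*x^2 ≤ γ x := by
          have := hlow x hxL
          linarith
        have hγpos' : 0 < γ x := hγpos x hxL
        show ‖φ x‖ ≤ 1/(Cell^3*r₀^3)
        rw [Real.norm_eq_abs]
        have := tailpoint hCell hr₀ hx.1.le hγx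
        simpa only [hφ_def] using this
    -- FTC computation
    have hQ : (∫ r in (0:ℝ)..r₀, χ r) = Fmod a b h r₀ - Fmod a b h 0 := by
      apply intervalIntegral.integral_eq_sub_of_hasDerivAt
      · intro x _
        have := hasDerivAt_Fmod (b := b) ha hh x
        simpa only [hχ_def] using this
      · exact hχcont.intervalIntegrable _ _
    -- remainder estimate
    have hRem : |Fmod a b h r₀ - Fmod a b h 0 - M| ≤ RemB := by
      rw [hM_def]
      exact Fmod_rem hR₁ hR₃ hh hh1 hr₀
    -- combine everything
    have hdecomp : I - M =
        ((∫ r in (0:ℝ)..r₀, φ r) - ∫ r in (0:ℝ)..r₀, ψ r)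
        + ((∫ r in (0:ℝ)..r₀, ψ r) - ∫ r in (0:ℝ)..r₀, χ r)
        + (∫ r in r₀..L, φ r)
        + ((∫ r in (0:ℝ)..r₀, χ r) - M) := by
      rw [hsplit]; ring
    have hRem' : |(∫ r in (0:ℝ)..r₀, χ r) - M| ≤ RemB := by rw [hQ]; exact hRem
    rw [hdecomp, hC'_def]
    refine le_trans (abs_add_le _ _) ?_
    refine add_le_add (le_trans (abs_add_le _ _) ?_) hRem'
    refine add_le_add (le_trans (abs_add_le _ _) ?_) hT
    exact add_le_add hE1 hE2
  have key : 2*Real.pi*(36*f₀^2*I) - 72*Real.pi*f₀^2*M = 72*Real.pi*f₀^2*(I - M) := by ring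
  rw [hCong, key, abs_mul, abs_of_nonneg (by positivity : (0:ℝ) ≤ 72*Real.pi*f₀^2)]
  nlinarith [mul_le_mul_of_nonneg_left hI (show (0:ℝ) ≤ 72*Real.pi*f₀^2 by positivity),
    Real.pi_pos.le, sq_nonneg f₀]
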